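/- (Equivariance step in Theorem 3.5(i)) Let F = (F^k)_{k≥0} be a symbol system of rank r ≥ 2 on W, let V = ℂ × W × ∏_{k=2}^{r} (F^k)^*, and for v ∈ W let g_v : V → V be defined by g_v(t, w, (f^l)_{l=2}^r) = (t, w + t·v, (f'^k)_{k=2}^r) with f'^k(φ) = Σ_{l=2}^{k} binom(k,l) · f^l(ι_v^{k-l} φ) + k · (ι_v^{k-1} φ)(w) + t · (ι_v^{k} φ) for φ ∈ F^k. Define φ_F : ℂ × W → V by φ_F(t, w) = (t^r, t^{r-1} w, (e_k(t,w))_{k=2}^r), where e_k(t,w) ∈ (F^k)^* is the functional φ ↦ t^{r-k} · φ(w, …, w). Then for all t ∈ ℂ and all w, v ∈ W one has g_v(φ_F(t, w)) = φ_F(t, w + t·v). -/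

import Mathlib

open scoped BigOperators

noncomputable section

/-- `Sym^k W^*`: the space of `k`-multilinear forms on `W`. -/
abbrev SymForm (W : Type*) [AddCommGroup W] [Module ℂ W] (k : ℕ) : Type _ :=
  MultilinearMap ℂ (fun _ : Fin k => W) ℂ

variable {W : Type*} [AddCommGroup W] [Module ℂ W]

/-- A multilinear form is symmetric. -/
def IsSymForm {k : ℕ} (φ : SymForm W k) : Prop :=
  ∀ (σ : Equiv.Perm (Fin k)) (v : Fin k → W), φ (v ∘ σ) = φ v

/-- Contraction `ι_w` of a `(k+1)`-form with a vector `w`. -/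
def contr {k : ℕ} (w : W) (φ : SymForm W (k + 1)) : SymForm W k :=
  φ.curryLeft w

/-- Iterated contraction `ι_w^j : Sym^{m+j} W^* → Sym^m W^*`. -/
def contrPow (w : W) : (j : ℕ) → {m : ℕ} → SymForm W (m + j) → SymForm W m
  | 0, _, φ => φ
  | j + 1, _, φ => contrPow w j (contr w φ)

/-- Cast along an equality of arities. -/
def symCast {k l : ℕ} (h : k = l) (φ : SymForm W k) : SymForm W l := h ▸ φ

/-- A symbol system of rank `r` on `W` (Definition 3.2): a family of subspaces
`F^k ⊆ Sym^k W^*` of symmetric forms with `F^0 = ℂ`, `F^1 = W^*`, `F^r ≠ 0`, `F^k = 0` for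
`k > r`, closed under all contractions `ι_w`. -/
structure SymbolSystem (W : Type*) [AddCommGroup W] [Module ℂ W] (r : ℕ) where
  F : (k : ℕ) → Submodule ℂ (SymForm W k)
  isSymForm_mem : ∀ (k : ℕ), ∀ φ ∈ F k, IsSymForm φ
  F_zero : F 0 = ⊤
  F_one : F 1 = ⊤
  F_rank_ne_bot : F r ≠ ⊥
  F_eq_bot_of_gt : ∀ k : ℕ, r < k → F k = ⊥
  contr_mem : ∀ (k : ℕ) (w : W), ∀ φ ∈ F (k + 1), contr w φ ∈ F k

namespace SymbolSystem

variable {r : ℕ} (S : SymbolSystem W r)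

lemma symCast_mem {k l : ℕ} (h : k = l) {φ : SymForm W k} (hφ : φ ∈ S.F k) :
    symCast h φ ∈ S.F l := by subst h; exact hφ

end SymbolSystem

lemma SymbolSystem.contrPow_mem {r : ℕ} (S : SymbolSystem W r) (w : W) :
    ∀ (j : ℕ) {m : ℕ} (φ : SymForm W (m + j)), φ ∈ S.F (m + j) → contrPow w j φ ∈ S.F m
  | 0, _, _, h => h
  | j + 1, m, φ, h => S.contrPow_mem w j (contr w φ) (S.contr_mem (m + j) w φ h)

lemma contr_add {k : ℕ} (w : W) (φ ψ : SymForm W (k + 1)) :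
    contr w (φ + ψ) = contr w φ + contr w ψ := rfl

lemma contr_smul {k : ℕ} (w : W) (c : ℂ) (φ : SymForm W (k + 1)) :
    contr w (c • φ) = c • contr w φ := rfl

lemma contrPow_add (w : W) :
    ∀ (j : ℕ) {m : ℕ} (φ ψ : SymForm W (m + j)),
      contrPow w j (φ + ψ) = contrPow w j φ + contrPow w j ψ
  | 0, _, _, _ => rfl
  | j + 1, m, φ, ψ => by
      show contrPow w j (contr w (φ + ψ)) = _
      rw [contr_add, contrPow_add w j]
      rfl

lemma contrPow_smul (w : W) :
    ∀ (j : ℕ) {m : ℕ} (c : ℂ) (φ : SymForm W (m + j)),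
      contrPow w j (c • φ) = c • contrPow w j φ
  | 0, _, _, _ => rfl
  | j + 1, m, c, φ => by
      show contrPow w j (contr w (c • φ)) = _
      rw [contr_smul, contrPow_smul w j]
      rfl

/-- `ι_w^j` bundled as a linear map. -/
def contrPowL (w : W) (j : ℕ) {m : ℕ} : SymForm W (m + j) →ₗ[ℂ] SymForm W m where
  toFun := contrPow w j
  map_add' φ ψ := contrPow_add w j φ ψ
  map_smul' c φ := contrPow_smul w j c φ

/-- Arity cast bundled as a linear map. -/
def symCastL {k l : ℕ} (h : k = l) : SymForm W k →ₗ[ℂ] SymForm W l where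
  toFun := symCast h
  map_add' φ ψ := by subst h; rfl
  map_smul' c φ := by subst h; rfl

/-- Evaluation of a `k`-form on the diagonal `(x, …, x)`, as a linear functional. -/
def evalDiagL {k : ℕ} (x : W) : SymForm W k →ₗ[ℂ] ℂ where
  toFun φ := φ (fun _ => x)
  map_add' φ ψ := by simp
  map_smul' c φ := by simp

/-- Evaluation of a `0`-form (a constant), as a linear functional. -/
def eval0L : SymForm W 0 →ₗ[ℂ] ℂ where
  toFun φ := φ Fin.elim0
  map_add' φ ψ := by simp
  map_smul' c φ := by simp
variable {r : ℕ}

/-- The vector space `V = ℂ × W × ∏_{k=2}^{r} (F^k)^*`. -/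
abbrev ModelSpace (S : SymbolSystem W r) : Type _ :=
  ℂ × W × ((k : Fin (r - 1)) → Module.Dual ℂ (S.F (k.val + 2)))

/-- The linear map `F^K → F^L`, `φ ↦ ι_v^{K-L} φ` (for `L ≤ K`). -/
def ctrRestrict (S : SymbolSystem W r) (v : W) (K L : ℕ) (h : L ≤ K) :
    (S.F K) →ₗ[ℂ] (S.F L) :=
  LinearMap.codRestrict (S.F L)
    ((contrPowL v (K - L)).comp ((symCastL (show K = L + (K - L) by omega)).comp
      (S.F K).subtype))
    (fun φ => S.contrPow_mem v (K - L) _ (S.symCast_mem _ φ.2))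

/-- The map `g_v : V → V` from the proof of Theorem 3.5(i):
`g_v (t, w, (f^l)_l) = (t, w + t v, (f'^k)_k)` where
`f'^k(φ) = ∑_{l=2}^{k} C(k,l) f^l(ι_v^{k-l} φ) + k (ι_v^{k-1} φ)(w) + t ι_v^k φ`. -/
def gAct (S : SymbolSystem W r) (v : W) (z : ModelSpace S) : ModelSpace S :=
  ⟨z.1, z.2.1 + z.1 • v, fun k =>
    (∑ i : Fin (k.val + 1),
        (((k.val + 2).choose (i.val + 2) : ℕ) : ℂ) •
          (z.2.2 ⟨i.val, by have := i.isLt; have := k.isLt; omega⟩).comp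
            (ctrRestrict S v (k.val + 2) (i.val + 2) (by have := i.isLt; omega)))
      + ((k.val + 2 : ℕ) : ℂ) •
          ((evalDiagL z.2.1).comp ((contrPowL v (k.val + 1)).comp
            ((symCastL (show k.val + 2 = 1 + (k.val + 1) by omega)).comp
              (S.F (k.val + 2)).subtype)))
      + z.1 •
          (eval0L.comp ((contrPowL v (k.val + 2)).comp
            ((symCastL (show k.val + 2 = 0 + (k.val + 2) by omega)).comp
              (S.F (k.val + 2)).subtype)))⟩

/-- The map `φ_F : ℂ × W → V`,
`φ_F(t, w) = (t^r, t^{r-1} w, (e_k(t,w))_k)` where `e_k(t,w)(φ) = t^{r-k} φ(w, …, w)`. -/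
def PhiF (S : SymbolSystem W r) (t : ℂ) (w : W) : ModelSpace S :=
  ⟨t ^ r, t ^ (r - 1) • w, fun k =>
    t ^ (r - (k.val + 2)) • ((evalDiagL w).comp (S.F (k.val + 2)).subtype)⟩


/-! Expanding `φ(w + t v, …, w + t v)` by multilinearity and symmetry of `φ ∈ F^k` gives the
binomial sum `∑_j C(k,j) t^j φ(v^j, w^{k-j})`. On the other side, `ι_v^{k-l} φ` evaluated on
`(w, …, w)` is `φ(v^{k-l}, w^l)`, so the three terms of `f'^k` at `φ_F(t, w)` are the `l ≥ 2`,
`l = 1` and `l = 0` parts of `∑_l C(k,l) t^{r-l} φ(v^{k-l}, w^l)`, which is `t^{r-k}` times the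
binomial sum after reindexing by `j = k - l`. -/

open Finset

def stepTuple {α : Type*} (v w : α) (j n : ℕ) : Fin n → α := fun i => if (i : ℕ) < j then v else w

theorem Fin.cons_stepTuple {α : Type*} (v w : α) (j n : ℕ) :
    (Fin.cons v (stepTuple v w j n) : Fin (n + 1) → α) = stepTuple v w (j + 1) (n + 1) := by
  funext i
  refine Fin.cases ?_ (fun i => ?_) i <;> simp [stepTuple]

theorem Fin.exists_perm_val_lt_card_iff {n : ℕ} (s : Finset (Fin n)) :
    ∃ σ : Equiv.Perm (Fin n), ∀ i, (σ i : ℕ) < #s ↔ i ∈ s := by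
  have hin : Fintype.card {i // i ∈ s} = #s := Fintype.card_coe s
  have hout : Fintype.card {i // i ∉ s} = n - #s := by
    rw [Fintype.card_subtype_compl, hin, Fintype.card_fin]
  let e : Fin n ≃ Fin (#s + (n - #s)) :=
    (Equiv.sumCompl (· ∈ s)).symm.trans
      (((Fintype.equivFinOfCardEq hin).sumCongr (Fintype.equivFinOfCardEq hout)).trans
        finSumFinEquiv)
  have hs : #s ≤ n := by simpa using s.card_le_univ
  refine ⟨e.trans (finCongr (by omega)), fun i => ?_⟩
  by_cases hi : i ∈ s
  · simp [e, hi, Equiv.sumCompl_symm_apply_of_pos]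
  · simp [e, hi, Equiv.sumCompl_symm_apply_of_neg]

theorem sum_range_choose_mul_pow_sub_mul {α : Type*} [CommSemiring α] (t : α) (B : ℕ → α)
    {K R : ℕ} (hK : K ≤ R) :
    ∑ l ∈ range (K + 1), (K.choose l : α) * t ^ (R - l) * B (K - l) =
      t ^ (R - K) * ∑ j ∈ range (K + 1), (K.choose j : α) * t ^ j * B j := by
  rw [mul_sum, ← sum_range_reflect]
  refine sum_congr rfl fun l hl => ?_
  have hlK : l ≤ K := Nat.lt_succ_iff.mp (mem_range.mp hl)
  rw [Nat.add_sub_cancel, Nat.choose_symm hlK, Nat.sub_sub_self hlK,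
    show R - (K - l) = (R - K) + l by omega, pow_add]
  ring

theorem IsSymForm.apply_piecewise {n : ℕ} {φ : SymForm W n} (hφ : IsSymForm φ)
    (s : Finset (Fin n)) (v w : W) :
    φ (s.piecewise (fun _ => v) (fun _ => w)) = φ (stepTuple v w #s n) := by
  obtain ⟨σ, hσ⟩ := Fin.exists_perm_val_lt_card_iff s
  rw [← hφ σ (stepTuple v w #s n)]
  congr 1
  funext i
  simp [stepTuple, Finset.piecewise, hσ]

theorem IsSymForm.apply_add_smul {n : ℕ} {φ : SymForm W n} (hφ : IsSymForm φ)
    (t : ℂ) (v w : W) :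
    φ (fun _ => w + t • v) =
      ∑ j ∈ range (n + 1), (n.choose j : ℂ) * t ^ j * φ (stepTuple v w j n) := by
  have hpiece (s : Finset (Fin n)) :
      φ (s.piecewise (fun _ => t • v) (fun _ => w)) = t ^ #s * φ (stepTuple v w #s n) := by
    have : s.piecewise (fun _ => t • v) (fun _ => w) =
        s.piecewise (fun i => t • s.piecewise (fun _ => v) (fun _ => w) i)
          (s.piecewise (fun _ => v) (fun _ => w)) := by
      funext i; by_cases hi : i ∈ s <;> simp [hi]
    rw [this, φ.map_piecewise_smul, prod_const, hφ.apply_piecewise, smul_eq_mul]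
  calc φ (fun _ => w + t • v) = φ ((fun _ => t • v) + fun _ => w) := by
        congr 1; funext i; simp [add_comm]
    _ = ∑ s : Finset (Fin n), t ^ #s * φ (stepTuple v w #s n) := by
        rw [φ.map_add_univ]; simp only [hpiece]
    _ = _ := by
        rw [← powerset_univ, sum_powerset_apply_card (fun j => t ^ j * φ (stepTuple v w j n)),
          card_univ, Fintype.card_fin]
        simp only [nsmul_eq_mul, mul_assoc]

theorem contrPow_apply_const (v w : W) :
    ∀ (j : ℕ) {m : ℕ} (φ : SymForm W (m + j)),
      contrPow v j φ (fun _ => w) = φ (stepTuple v w j (m + j))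
  | 0, m, φ => by rw [contrPow]; congr 1
  | j + 1, m, φ => by
      rw [contrPow, contrPow_apply_const v w j, contr, MultilinearMap.curryLeft_apply,
        Fin.cons_stepTuple]
      rfl

theorem contrPow_symCast_apply_const (v w : W) {K L J : ℕ} (h : K = L + J) (φ : SymForm W K) :
    contrPow v J (symCast h φ) (fun _ => w) = φ (stepTuple v w J K) := by
  subst h; exact contrPow_apply_const v w J φ

theorem gAct_PhiF_apply (S : SymbolSystem W r) (t : ℂ) (v w : W) (k : Fin (r - 1))
    (φ : S.F (k.val + 2)) :
    (gAct S v (PhiF S t w)).2.2 k φ =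
      ∑ l ∈ range (k.val + 2 + 1), ((k.val + 2).choose l : ℂ) * t ^ (r - l) *
        (φ : SymForm W (k.val + 2)) (stepTuple v w (k.val + 2 - l) (k.val + 2)) := by
  simp only [gAct, PhiF, LinearMap.add_apply, LinearMap.sum_apply, LinearMap.smul_apply,
      LinearMap.comp_apply, smul_eq_mul, Submodule.coe_subtype, ctrRestrict,
      LinearMap.codRestrict_apply, contrPowL, symCastL, evalDiagL, eval0L,
      LinearMap.coe_mk, AddHom.coe_mk]
  have hdiag1 (ψ : SymForm W 1) (c : ℂ) : ψ (fun _ => c • w) = c * ψ (fun _ => w) := by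
    simpa using ψ.map_smul_univ (fun _ => c) (fun _ => w)
  rw [hdiag1, Subsingleton.elim Fin.elim0 (fun _ => w)]
  simp only [contrPow_symCast_apply_const]
  rw [sum_range_succ', sum_range_succ', ← Fin.sum_univ_eq_sum_range]
  simp [mul_assoc]

theorem gAct_PhiF_equivariant_general
    {W : Type*} [AddCommGroup W] [Module ℂ W]
    {r : ℕ} (hr : 2 ≤ r) (S : SymbolSystem W r) :
    ∀ (t : ℂ) (w v : W), gAct S v (PhiF S t w) = PhiF S t (w + t • v) := by
  intro t w v
  refine Prod.ext rfl (Prod.ext ?_ ?_)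
  · show t ^ (r - 1) • w + t ^ r • v = t ^ (r - 1) • (w + t • v)
    rw [smul_add, smul_smul, ← pow_succ, Nat.sub_add_cancel (by omega)]
  · funext k
    ext φ
    have hk : k.val + 2 ≤ r := by omega
    rw [gAct_PhiF_apply, sum_range_choose_mul_pow_sub_mul t
      (fun j => (φ : SymForm W (k.val + 2)) (stepTuple v w j (k.val + 2))) hk]
    show _ = t ^ (r - (k.val + 2)) * (φ : SymForm W (k.val + 2)) (fun _ => w + t • v)
    rw [(S.isSymForm_mem _ _ φ.2).apply_add_smul]

/-- equivariance step in Theorem 3.5(i): for all `t ∈ ℂ` and `w, v ∈ W`,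
`g_v (φ_F(t, w)) = φ_F(t, w + t v)`. -/
theorem gAct_PhiF_equivariant
    {W : Type*} [AddCommGroup W] [Module ℂ W] [FiniteDimensional ℂ W]
    {r : ℕ} (hr : 2 ≤ r) (S : SymbolSystem W r) :
    ∀ (t : ℂ) (w v : W), gAct S v (PhiF S t w) = PhiF S t (w + t • v) :=
  gAct_PhiF_equivariant_general hr S
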